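/- Second-order partial derivatives of the single-group marginal negative log-likelihood with respect to the random-effect variances: let Z be a real n × q matrix with columns z₁, …, z_q, let Λ be a symmetric positive definite n × n real matrix, let ξ ∈ ℝⁿ, and define Ω(γ) = Z·Diag(γ)·Zᵀ + Λ and L(γ) = (1/2) ξᵀ Ω(γ)^{-1} ξ + (1/2) log det Ω(γ). At any γ ∈ ℝ^q where Ω(γ) is positive definite, the second mixed partial derivative ∂²L/∂γ_j∂γ_k equals (ξᵀ Ω(γ)^{-1} z_j)(z_jᵀ Ω(γ)^{-1} z_k)(z_kᵀ Ω(γ)^{-1} ξ) − (1/2)(z_jᵀ Ω(γ)^{-1} z_k)² for all j, k ∈ {1, …, q}. -/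

import Mathlib

/-!
Moving `γ` along a coordinate direction `eⱼ` moves `Ω(γ)` along the rank-one matrix `zⱼ zⱼᵀ`.
By the matrix determinant lemma, `det (Ω + t zⱼ zⱼᵀ) = det Ω · (1 + t zⱼᵀ Ω⁻¹ zⱼ)`, and
inversion has derivative `B ↦ -Ω⁻¹ B Ω⁻¹`; so wherever `Ω` is invertible (an open set)
`∂ⱼ L = ½ zⱼᵀ Ω⁻¹ zⱼ - ½ (ξᵀ Ω⁻¹ zⱼ)(zⱼᵀ Ω⁻¹ ξ)`. Differentiating these quadratic forms
`aᵀ Ω⁻¹ b` once more in direction `eₖ` by the same rule, and using the symmetry of `Ω⁻¹`,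
gives the formula.
-/

open Matrix

variable {m ι : Type*} [Fintype ι] [DecidableEq ι]

namespace Matrix

section CommSemiring

variable {R : Type*} [CommSemiring R]

theorem mul_diagonal_mul_transpose_eq_sum (Z : Matrix m ι R) (γ : ι → R) :
    Z * diagonal γ * Zᵀ = ∑ i, γ i • vecMulVec (Zᵀ i) (Zᵀ i) := by
  ext a b
  rw [mul_apply]
  simp [mul_diagonal, vecMulVec_apply, Matrix.sum_apply, mul_comm, mul_left_comm]

theorem mul_diagonal_single_mul_transpose (Z : Matrix m ι R) (j : ι) :
    Z * diagonal (Pi.single j (1 : R)) * Zᵀ = vecMulVec (Zᵀ j) (Zᵀ j) := by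
  simp [mul_diagonal_mul_transpose_eq_sum, Pi.single_apply]

theorem mul_diagonal_add_smul_single_mul_transpose (Z : Matrix m ι R) (γ : ι → R) (t : R)
    (j : ι) :
    Z * diagonal (γ + t • Pi.single j 1) * Zᵀ
      = Z * diagonal γ * Zᵀ + t • vecMulVec (Zᵀ j) (Zᵀ j) := by
  rw [← mul_diagonal_single_mul_transpose, ← Matrix.smul_mul, ← Matrix.mul_smul, ← diagonal_smul,
    ← Matrix.add_mul, ← Matrix.mul_add, diagonal_add]
  rfl

variable [Fintype m]

theorem dotProduct_mul_vecMulVec_mul_mulVec (A B : Matrix m m R) (a b u v : m → R) :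
    a ⬝ᵥ (A * vecMulVec u v * B) *ᵥ b = (a ⬝ᵥ A *ᵥ u) * (v ⬝ᵥ B *ᵥ b) := by
  rw [← mulVec_mulVec, ← mulVec_mulVec, vecMulVec_mulVec, mulVec_smul, dotProduct_smul,
    MulOpposite.smul_eq_mul_unop, MulOpposite.unop_op, mul_comm]

theorem IsSymm.dotProduct_mulVec_comm {A : Matrix m m R} (hA : A.IsSymm) (a b : m → R) :
    a ⬝ᵥ A *ᵥ b = b ⬝ᵥ A *ᵥ a := by
  rw [dotProduct_mulVec, ← mulVec_transpose, hA.eq, dotProduct_comm]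

def dotProductMulVecₗ (a b : m → R) : Matrix m m R →ₗ[R] R where
  toFun M := a ⬝ᵥ M *ᵥ b
  map_add' M N := by rw [add_mulVec, dotProduct_add]
  map_smul' c M := by rw [smul_mulVec, dotProduct_smul, RingHom.id_apply]

end CommSemiring

theorem det_add_smul_vecMulVec [Fintype m] [DecidableEq m] {R : Type*} [CommRing R]
    {A : Matrix m m R} (hA : IsUnit A.det) (t : R) (u v : m → R) :
    (A + t • vecMulVec u v).det = A.det * (1 + t * (v ⬝ᵥ A⁻¹ *ᵥ u)) := by
  rw [← vecMulVec_smul, vecMulVec_eq Unit, det_add_replicateCol_mul_replicateRow hA,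
    Matrix.mul_assoc, ← replicateCol_mulVec, det_unique (n := Unit), add_apply, one_apply_eq,
    replicateRow_mul_replicateCol_apply, smul_dotProduct, smul_eq_mul]

end Matrix

variable [Fintype m] [DecidableEq m]

theorem DifferentiableAt.matrix_det {𝕜 E : Type*} [NontriviallyNormedField 𝕜]
    [NormedAddCommGroup E] [NormedSpace 𝕜 E] {f : E → Matrix m m 𝕜} {x : E}
    (hf : ∀ i j, DifferentiableAt 𝕜 (fun y => f y i j) x) :
    DifferentiableAt 𝕜 (fun y => (f y).det) x := by
  simp only [det_apply]
  fun_prop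

theorem hasDerivAt_log_det_add_smul_vecMulVec {A : Matrix m m ℝ} (hA : A.det ≠ 0)
    (u v : m → ℝ) :
    HasDerivAt (fun t : ℝ => Real.log (A + t • vecMulVec u v).det) (v ⬝ᵥ A⁻¹ *ᵥ u) 0 := by
  simp_rw [det_add_smul_vecMulVec hA.isUnit]
  have hline : HasDerivAt (fun t : ℝ => A.det * (1 + t * (v ⬝ᵥ A⁻¹ *ᵥ u)))
      (A.det * (v ⬝ᵥ A⁻¹ *ᵥ u)) 0 := by
    simpa using ((hasDerivAt_id (0 : ℝ)).mul_const (v ⬝ᵥ A⁻¹ *ᵥ u)).const_add 1 |>.const_mul A.det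
  exact (hline.log (by simpa using hA)).congr_deriv (by simp [hA])

def marginalCov (Z : Matrix m ι ℝ) (Λ : Matrix m m ℝ) (γ : ι → ℝ) : Matrix m m ℝ :=
  Z * diagonal γ * Zᵀ + Λ

noncomputable def marginalNLL (Z : Matrix m ι ℝ) (Λ : Matrix m m ℝ) (ξ : m → ℝ) (γ : ι → ℝ) : ℝ :=
  1 / 2 * (ξ ⬝ᵥ (marginalCov Z Λ γ)⁻¹ *ᵥ ξ) + 1 / 2 * Real.log (marginalCov Z Λ γ).det

section

-- Any norm making matrices a complete normed algebra serves to differentiate inversion.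
attribute [local instance] Matrix.linftyOpNormedRing Matrix.linftyOpNormedAlgebra

theorem hasDerivAt_dotProduct_inv_add_smul_mulVec {A : Matrix m m ℝ} (hA : A.det ≠ 0)
    (B : Matrix m m ℝ) (a b : m → ℝ) :
    HasDerivAt (fun t : ℝ => a ⬝ᵥ (A + t • B)⁻¹ *ᵥ b) (-(a ⬝ᵥ (A⁻¹ * B * A⁻¹) *ᵥ b)) 0 := by
  have hA' : IsUnit A := (isUnit_iff_isUnit_det A).2 hA.isUnit
  have hinv := (hasFDerivAt_ringInverse (𝕜 := ℝ) hA'.unit).comp_hasDerivAt_of_eq 0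
    (((hasDerivAt_id (0 : ℝ)).smul_const B).const_add A) (by simp)
  have hquad := (dotProductMulVecₗ a b).toContinuousLinearMap.hasFDerivAt.comp_hasDerivAt 0 hinv
  rw [← Ring.inverse_unit, IsUnit.unit_spec] at hquad
  simp only [Function.comp_def, id, one_smul, _root_.neg_apply,
    ContinuousLinearMap.mulLeftRight_apply] at hquad
  simp_rw [nonsing_inv_eq_ringInverse]
  exact hquad.congr_deriv (by
    change a ⬝ᵥ (-_) *ᵥ b = _
    rw [neg_mulVec, dotProduct_neg])

theorem differentiableAt_dotProduct_inv_marginalCov_mulVec (Z : Matrix m ι ℝ)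
    (Λ : Matrix m m ℝ) {γ : ι → ℝ} (hγ : (marginalCov Z Λ γ).det ≠ 0) (a b : m → ℝ) :
    DifferentiableAt ℝ (fun γ => a ⬝ᵥ (marginalCov Z Λ γ)⁻¹ *ᵥ b) γ := by
  have hΩ : Differentiable ℝ (marginalCov Z Λ) := by
    unfold marginalCov
    simp_rw [mul_diagonal_mul_transpose_eq_sum]
    fun_prop
  have hu : IsUnit (marginalCov Z Λ γ) := (isUnit_iff_isUnit_det _).2 hγ.isUnit
  have hquad := (dotProductMulVecₗ a b).toContinuousLinearMap.differentiableAt.comp γ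
    ((hΩ γ).inverse hu)
  rw [LinearMap.coe_toContinuousLinearMap'] at hquad
  simpa [Function.comp_def, dotProductMulVecₗ, nonsing_inv_eq_ringInverse] using hquad

end

variable (Z : Matrix m ι ℝ) (Λ : Matrix m m ℝ)

omit [Fintype m] [DecidableEq m] in
theorem marginalCov_add_smul_single (γ : ι → ℝ) (t : ℝ) (j : ι) :
    marginalCov Z Λ (γ + t • Pi.single j 1)
      = marginalCov Z Λ γ + t • vecMulVec (Zᵀ j) (Zᵀ j) := by
  rw [marginalCov, marginalCov, mul_diagonal_add_smul_single_mul_transpose, add_right_comm]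

theorem differentiable_det_marginalCov : Differentiable ℝ fun γ => (marginalCov Z Λ γ).det := by
  refine fun γ => DifferentiableAt.matrix_det fun a b => ?_
  simp only [marginalCov, Matrix.add_apply, mul_apply, diagonal_apply, transpose_apply, mul_ite,
    mul_zero, Finset.sum_ite_eq', Finset.mem_univ, if_true]
  fun_prop

variable {Z Λ}

theorem fderiv_dotProduct_inv_marginalCov_mulVec_single {γ : ι → ℝ}
    (hγ : (marginalCov Z Λ γ).det ≠ 0) (a b : m → ℝ) (k : ι) :
    fderiv ℝ (fun γ => a ⬝ᵥ (marginalCov Z Λ γ)⁻¹ *ᵥ b) γ (Pi.single k 1)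
      = -((a ⬝ᵥ (marginalCov Z Λ γ)⁻¹ *ᵥ Zᵀ k) * (Zᵀ k ⬝ᵥ (marginalCov Z Λ γ)⁻¹ *ᵥ b)) := by
  refine (differentiableAt_dotProduct_inv_marginalCov_mulVec Z Λ hγ a b).hasFDerivAt.hasLineDerivAt
    _ |>.unique ?_
  rw [← dotProduct_mul_vecMulVec_mul_mulVec]
  unfold HasLineDerivAt
  simp_rw [marginalCov_add_smul_single]
  exact hasDerivAt_dotProduct_inv_add_smul_mulVec hγ _ a b

theorem fderiv_log_det_marginalCov_single {γ : ι → ℝ} (hγ : (marginalCov Z Λ γ).det ≠ 0)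
    (j : ι) :
    fderiv ℝ (fun γ => Real.log (marginalCov Z Λ γ).det) γ (Pi.single j 1)
      = Zᵀ j ⬝ᵥ (marginalCov Z Λ γ)⁻¹ *ᵥ Zᵀ j := by
  refine ((differentiable_det_marginalCov Z Λ γ).log hγ).hasFDerivAt.hasLineDerivAt _ |>.unique ?_
  unfold HasLineDerivAt
  simp_rw [marginalCov_add_smul_single]
  exact hasDerivAt_log_det_add_smul_vecMulVec hγ _ _

theorem fderiv_marginalNLL_single {γ : ι → ℝ} (hγ : (marginalCov Z Λ γ).det ≠ 0) (ξ : m → ℝ)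
    (j : ι) :
    fderiv ℝ (marginalNLL Z Λ ξ) γ (Pi.single j 1)
      = 1 / 2 * (Zᵀ j ⬝ᵥ (marginalCov Z Λ γ)⁻¹ *ᵥ Zᵀ j)
        - 1 / 2 * ((ξ ⬝ᵥ (marginalCov Z Λ γ)⁻¹ *ᵥ Zᵀ j) * (Zᵀ j ⬝ᵥ (marginalCov Z Λ γ)⁻¹ *ᵥ ξ)) := by
  have hquad := differentiableAt_dotProduct_inv_marginalCov_mulVec Z Λ hγ ξ ξ
  have hlog := (differentiable_det_marginalCov Z Λ γ).log hγ
  unfold marginalNLL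
  rw [fderiv_fun_add (hquad.const_mul _) (hlog.const_mul _), fderiv_const_mul hquad,
    fderiv_const_mul hlog]
  simp only [_root_.add_apply, _root_.smul_apply, smul_eq_mul,
    fderiv_dotProduct_inv_marginalCov_mulVec_single hγ, fderiv_log_det_marginalCov_single hγ]
  ring

theorem fderiv_fderiv_marginalNLL_single_single {γ : ι → ℝ}
    (hγ : (marginalCov Z Λ γ).det ≠ 0) (hsymm : (marginalCov Z Λ γ).IsSymm) (ξ : m → ℝ)
    (j k : ι) :
    fderiv ℝ (fun γ => fderiv ℝ (marginalNLL Z Λ ξ) γ (Pi.single j 1)) γ (Pi.single k 1)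
      = (ξ ⬝ᵥ (marginalCov Z Λ γ)⁻¹ *ᵥ Zᵀ j) * (Zᵀ j ⬝ᵥ (marginalCov Z Λ γ)⁻¹ *ᵥ Zᵀ k)
          * (Zᵀ k ⬝ᵥ (marginalCov Z Λ γ)⁻¹ *ᵥ ξ)
        - 1 / 2 * (Zᵀ j ⬝ᵥ (marginalCov Z Λ γ)⁻¹ *ᵥ Zᵀ k) ^ 2 := by
  have hnear : ∀ᶠ γ' in nhds γ, (marginalCov Z Λ γ').det ≠ 0 :=
    (differentiable_det_marginalCov Z Λ).continuous.continuousAt.eventually_ne hγ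
  have hquad := differentiableAt_dotProduct_inv_marginalCov_mulVec Z Λ hγ
  rw [(Filter.eventuallyEq_of_mem hnear fun γ' hγ' => fderiv_marginalNLL_single hγ' ξ j).fderiv_eq,
    fderiv_fun_sub ((hquad _ _).const_mul _) (((hquad _ _).fun_mul (hquad _ _)).const_mul _),
    fderiv_const_mul (hquad _ _), fderiv_const_mul ((hquad _ _).fun_mul (hquad _ _)),
    fderiv_fun_mul (hquad _ _) (hquad _ _)]
  simp only [_root_.sub_apply, _root_.add_apply, _root_.smul_apply, smul_eq_mul,
    fderiv_dotProduct_inv_marginalCov_mulVec_single hγ]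
  rw [hsymm.inv.dotProduct_mulVec_comm (Zᵀ k) (Zᵀ j), hsymm.inv.dotProduct_mulVec_comm (Zᵀ j) ξ,
    hsymm.inv.dotProduct_mulVec_comm ξ (Zᵀ k)]
  ring

theorem second_deriv_marginal_nll_wrt_variances_general {n q : ℕ}
    (Z : Matrix (Fin n) (Fin q) ℝ)
    (Λ : Matrix (Fin n) (Fin n) ℝ)
    (ξ : Fin n → ℝ) (γ₀ : Fin q → ℝ)
    (hpos : (Z * Matrix.diagonal γ₀ * Zᵀ + Λ).PosDef)
    (j k : Fin q) :
    fderiv ℝ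
      (fun γ : Fin q → ℝ =>
        fderiv ℝ
          (fun γ' : Fin q → ℝ =>
            (1 / 2 : ℝ) * (ξ ⬝ᵥ ((Z * Matrix.diagonal γ' * Zᵀ + Λ)⁻¹ *ᵥ ξ)) +
              (1 / 2 : ℝ) * Real.log (Z * Matrix.diagonal γ' * Zᵀ + Λ).det)
          γ (Pi.single j 1))
      γ₀ (Pi.single k 1) =
    (ξ ⬝ᵥ ((Z * Matrix.diagonal γ₀ * Zᵀ + Λ)⁻¹ *ᵥ Zᵀ j)) *
        (Zᵀ j ⬝ᵥ ((Z * Matrix.diagonal γ₀ * Zᵀ + Λ)⁻¹ *ᵥ Zᵀ k)) *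
        (Zᵀ k ⬝ᵥ ((Z * Matrix.diagonal γ₀ * Zᵀ + Λ)⁻¹ *ᵥ ξ)) -
      (1 / 2 : ℝ) * (Zᵀ j ⬝ᵥ ((Z * Matrix.diagonal γ₀ * Zᵀ + Λ)⁻¹ *ᵥ Zᵀ k)) ^ 2 :=
  fderiv_fderiv_marginalNLL_single_single hpos.det_pos.ne'
    (isHermitian_iff_isSymm.1 hpos.isHermitian) ξ j k

/-- Second-order partial derivatives of the single-group marginal negative
log-likelihood with respect to the random-effect variances: with
`Ω(γ) = Z·Diag(γ)·Zᵀ + Λ` positive definite at `γ₀` and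
`L(γ) = (1/2) ξᵀ Ω(γ)⁻¹ ξ + (1/2) log det Ω(γ)`, the mixed partial
`∂²L/∂γⱼ∂γₖ` at `γ₀` equals
`(ξᵀ Ω⁻¹ zⱼ)(zⱼᵀ Ω⁻¹ zₖ)(zₖᵀ Ω⁻¹ ξ) − (1/2)(zⱼᵀ Ω⁻¹ zₖ)²`. -/
theorem second_deriv_marginal_nll_wrt_variances {n q : ℕ}
    (Z : Matrix (Fin n) (Fin q) ℝ)
    (Λ : Matrix (Fin n) (Fin n) ℝ) (hΛ : Λ.PosDef)
    (ξ : Fin n → ℝ) (γ₀ : Fin q → ℝ)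
    (hpos : (Z * Matrix.diagonal γ₀ * Zᵀ + Λ).PosDef)
    (j k : Fin q) :
    fderiv ℝ
      (fun γ : Fin q → ℝ =>
        fderiv ℝ
          (fun γ' : Fin q → ℝ =>
            (1 / 2 : ℝ) * (ξ ⬝ᵥ ((Z * Matrix.diagonal γ' * Zᵀ + Λ)⁻¹ *ᵥ ξ)) +
              (1 / 2 : ℝ) * Real.log (Z * Matrix.diagonal γ' * Zᵀ + Λ).det)
          γ (Pi.single j 1))
      γ₀ (Pi.single k 1) =
    (ξ ⬝ᵥ ((Z * Matrix.diagonal γ₀ * Zᵀ + Λ)⁻¹ *ᵥ Zᵀ j)) *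
        (Zᵀ j ⬝ᵥ ((Z * Matrix.diagonal γ₀ * Zᵀ + Λ)⁻¹ *ᵥ Zᵀ k)) *
        (Zᵀ k ⬝ᵥ ((Z * Matrix.diagonal γ₀ * Zᵀ + Λ)⁻¹ *ᵥ ξ)) -
      (1 / 2 : ℝ) * (Zᵀ j ⬝ᵥ ((Z * Matrix.diagonal γ₀ * Zᵀ + Λ)⁻¹ *ᵥ Zᵀ k)) ^ 2 :=
  second_deriv_marginal_nll_wrt_variances_general Z Λ ξ γ₀ hpos j k
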